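/- Nature's strategy z* is minimax optimal: z* ∈ Z, and sup_{g ∈ [-1,1]^n} (1/n)·∑_{i=1}^n z*_i g_i = V; in particular, for every g ∈ [-1,1]^n one has (1/n)·∑_{i=1}^n z*_i g_i ≤ V. -/

import Mathlib

open Finset

lemma sign_mul_self' (x : ℝ) : Real.sign x * x = |x| := by
  rcases lt_trichotomy x 0 with h | h | h
  · rw [Real.sign_of_neg h, abs_of_neg h]; ring
  · simp [h]
  · rw [Real.sign_of_pos h, abs_of_pos h]; ring

lemma abs_sign_le' (x : ℝ) : |Real.sign x| ≤ 1 := by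
  rcases lt_trichotomy x 0 with h | h | h
  · rw [Real.sign_of_neg h]; norm_num
  · simp [h]
  · rw [Real.sign_of_pos h]; norm_num

lemma abs_sign_eq_one' {x : ℝ} (hx : x ≠ 0) : |Real.sign x| = 1 := by
  rcases lt_trichotomy x 0 with h | h | h
  · rw [Real.sign_of_neg h]; norm_num
  · exact absurd h hx
  · rw [Real.sign_of_pos h]; norm_num

/-- Nature's minimax optimal strategy. -/
noncomputable def zstar (n : ℕ) (a : ℕ → ℝ) (lam : ℝ) (v : ℕ) : ℕ → ℝ :=
  fun i =>
    if i < v then Real.sign (a i)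
    else if i = v then ((n : ℝ) * lam - ∑ j ∈ Icc 1 (v - 1), |a j|) / a v
    else 0

/-- Nature's strategy z* is minimax optimal. -/
theorem zstar_minimax_optimal
    (n : ℕ) (hn : 1 ≤ n) (a : ℕ → ℝ)
    (hord : ∀ i j : ℕ, 1 ≤ i → i ≤ j → j ≤ n → |a j| ≤ |a i|)
    (lam : ℝ) (hlam_pos : 0 < lam)
    (hlam_le : lam ≤ (1 / (n : ℝ)) * ∑ i ∈ Icc 1 n, |a i|)
    (v : ℕ) (hv1 : 1 ≤ v) (hvn : v ≤ n)
    (hv_ge : lam ≤ (1 / (n : ℝ)) * ∑ j ∈ Icc 1 v, |a j|)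
    (hv_min : ∀ i : ℕ, 1 ≤ i → i < v → (1 / (n : ℝ)) * ∑ j ∈ Icc 1 i, |a j| < lam)
    (V : ℝ)
    (hV : V = ((v : ℝ) - 1) / n +
        (lam - (1 / (n : ℝ)) * ∑ i ∈ Icc 1 (v - 1), |a i|) / |a v|) :
    (∀ i ∈ Icc 1 n, |zstar n a lam v i| ≤ 1) ∧
    lam ≤ (1 / (n : ℝ)) * ∑ i ∈ Icc 1 n, zstar n a lam v i * a i ∧
    sSup {x : ℝ | ∃ g : ℕ → ℝ, (∀ i ∈ Icc 1 n, |g i| ≤ 1) ∧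
        x = (1 / (n : ℝ)) * ∑ i ∈ Icc 1 n, zstar n a lam v i * g i} = V ∧
    (∀ g : ℕ → ℝ, (∀ i ∈ Icc 1 n, |g i| ≤ 1) →
        (1 / (n : ℝ)) * ∑ i ∈ Icc 1 n, zstar n a lam v i * g i ≤ V) := by
  have hn' : (0:ℝ) < n := by exact_mod_cast hn
  set S := ∑ i ∈ Icc 1 (v-1), |a i| with hS
  have hv' : v - 1 + 1 = v := Nat.succ_pred_eq_of_pos hv1
  have hsplit : ∀ f : ℕ → ℝ, ∑ i ∈ Icc 1 v, f i = (∑ i ∈ Icc 1 (v-1), f i) + f v := by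
    intro f
    conv_lhs => rw [← hv']
    rw [Finset.sum_Icc_succ_top (by omega), hv']
  have hSv : ∑ j ∈ Icc 1 v, |a j| = S + |a v| := hsplit _
  have h1 : (n:ℝ) * lam - S ≤ |a v| := by
    rw [hSv] at hv_ge
    rw [one_div, inv_mul_eq_div, le_div_iff₀ hn'] at hv_ge
    nlinarith
  have h2 : 0 < (n:ℝ) * lam - S := by
    rcases eq_or_lt_of_le hv1 with h | h
    · have : S = 0 := by
        rw [hS, ← h]
        simp
      rw [this]
      simpa using mul_pos hn' hlam_pos
    · have := hv_min (v-1) (by omega) (by omega)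
      rw [one_div, inv_mul_eq_div, div_lt_iff₀ hn'] at this
      nlinarith
  have hav : 0 < |a v| := lt_of_lt_of_le h2 h1
  have hane : a v ≠ 0 := abs_pos.mp hav
  have hai : ∀ i : ℕ, 1 ≤ i → i < v → a i ≠ 0 := by
    intro i hi1 hiv
    have := hord i v hi1 (le_of_lt hiv) hvn
    exact abs_pos.mp (lt_of_lt_of_le hav this)
  have hz_lt : ∀ i : ℕ, i < v → zstar n a lam v i = Real.sign (a i) := by
    intro i h; simp [zstar, h]
  have hz_v : zstar n a lam v v = ((n:ℝ) * lam - S) / a v := by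
    simp [zstar, hS]
  have hz_gt : ∀ i : ℕ, v < i → zstar n a lam v i = 0 := by
    intro i h
    unfold zstar
    rw [if_neg (by omega), if_neg (by omega)]
  have habs_v : |zstar n a lam v v| = ((n:ℝ) * lam - S) / |a v| := by
    rw [hz_v, abs_div, abs_of_pos h2]
  have hrestrict : ∀ x : ℕ → ℝ, (∀ i, v < i → x i = 0) →
      ∑ i ∈ Icc 1 n, x i = (∑ i ∈ Icc 1 (v-1), x i) + x v := by
    intro x hx
    rw [← hsplit x]
    refine (Finset.sum_subset (Finset.Icc_subset_Icc le_rfl hvn) ?_).symm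
    intro i hi hni
    simp only [Finset.mem_Icc] at hi hni
    exact hx i (by omega)
  have hsum_a : ∑ i ∈ Icc 1 n, zstar n a lam v i * a i = (n:ℝ) * lam := by
    rw [hrestrict (fun i => zstar n a lam v i * a i)
      (by intro i h; rw [hz_gt i h, zero_mul])]
    have hc : ∀ i ∈ Icc 1 (v-1), zstar n a lam v i * a i = |a i| := by
      intro i hi
      rw [Finset.mem_Icc] at hi
      rw [hz_lt i (by omega), sign_mul_self']
    rw [Finset.sum_congr rfl hc, hz_v, div_mul_cancel₀ _ hane, ← hS]
    ring
  have habs_sum : ∑ i ∈ Icc 1 n, |zstar n a lam v i| =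
      ((v:ℝ) - 1) + ((n:ℝ) * lam - S) / |a v| := by
    rw [hrestrict (fun i => |zstar n a lam v i|)
      (by intro i h; rw [hz_gt i h, abs_zero])]
    have hc : ∀ i ∈ Icc 1 (v-1), |zstar n a lam v i| = 1 := by
      intro i hi
      rw [Finset.mem_Icc] at hi
      rw [hz_lt i (by omega)]
      exact abs_sign_eq_one' (hai i hi.1 (by omega))
    rw [Finset.sum_congr rfl hc, Finset.sum_const, Nat.card_Icc, habs_v]
    have : ((v - 1 + 1 - 1 : ℕ) : ℝ) = (v:ℝ) - 1 := by
      push_cast [hv']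
      push_cast [Nat.cast_sub hv1]
      ring
    rw [nsmul_eq_mul, this, mul_one]
  have hVval : V = (1/(n:ℝ)) * ∑ i ∈ Icc 1 n, |zstar n a lam v i| := by
    rw [hV, habs_sum]
    field_simp
  have hub : ∀ g : ℕ → ℝ, (∀ i ∈ Icc 1 n, |g i| ≤ 1) →
      (1/(n:ℝ)) * ∑ i ∈ Icc 1 n, zstar n a lam v i * g i ≤ V := by
    intro g hg
    have hle : ∑ i ∈ Icc 1 n, zstar n a lam v i * g i ≤
        ∑ i ∈ Icc 1 n, |zstar n a lam v i| := by
      apply Finset.sum_le_sum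
      intro i hi
      calc zstar n a lam v i * g i ≤ |zstar n a lam v i * g i| := le_abs_self _
        _ = |zstar n a lam v i| * |g i| := abs_mul _ _
        _ ≤ |zstar n a lam v i| * 1 :=
            mul_le_mul_of_nonneg_left (hg i hi) (abs_nonneg _)
        _ = |zstar n a lam v i| := mul_one _
    rw [hVval]
    apply mul_le_mul_of_nonneg_left hle
    positivity
  refine ⟨?_, ?_, ?_, hub⟩
  · intro i hi
    rw [Finset.mem_Icc] at hi
    rcases lt_trichotomy i v with h | h | h
    · rw [hz_lt i h]; exact abs_sign_le' _
    · rw [h, habs_v, div_le_one hav]; exact h1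
    · rw [hz_gt i h]; norm_num
  · rw [hsum_a]
    have : (1/(n:ℝ)) * ((n:ℝ) * lam) = lam := by field_simp
    rw [this]
  · apply IsGreatest.csSup_eq
    constructor
    · refine ⟨fun i => Real.sign (zstar n a lam v i), fun i _ => abs_sign_le' _, ?_⟩
      rw [hVval]
      congr 1
      refine (Finset.sum_congr rfl fun i _ => ?_).symm
      rw [mul_comm, sign_mul_self']
    · rintro x ⟨g, hg, rfl⟩
      exact hub g hg
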